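/- arXiv:2407.21090 — 2 statements merged into one kernel-verified Lean document; each statement's English description precedes it below -/
import Mathlib

section
/- Soundness of STL robustness: for any STL formula φ (built from predicates h(s) ≥ π, negation, conjunction, disjunction, bounded eventually and bounded always) and any signal s and time k in the appropriate domain, if ρ(s, φ, k) > 0 then (s, k) satisfies φ, and if ρ(s, φ, k) < 0 then (s, k) violates φ. -/
/-- STL syntax over signals `s : ℕ → (Fin d → ℝ)`:
`φ ::= ⊤ | h(s) ≥ π | ¬φ | φ₁ ∧ φ₂ | φ₁ ∨ φ₂ | ◇_[a,b] φ | □_[a,b] φ`,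
with nonempty bounded integer intervals `[a,b]` (`a ≤ b`). -/
inductive STL (d : ℕ) : Type where
  | top : STL d
  | pred (h : (Fin d → ℝ) → ℝ) (π : ℝ) : STL d
  | neg (φ : STL d) : STL d
  | conj (φ₁ φ₂ : STL d) : STL d
  | disj (φ₁ φ₂ : STL d) : STL d
  | ev (a b : ℕ) (hab : a ≤ b) (φ : STL d) : STL d
  | alw (a b : ℕ) (hab : a ≤ b) (φ : STL d) : STL d

/-- Boolean semantics of STL: `STL.sat s φ k` means `(s, k) ⊨ φ`. -/
def STL.sat {d : ℕ} (s : ℕ → Fin d → ℝ) : STL d → ℕ → Prop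
  | .top, _ => True
  | .pred h π, k => h (s k) ≥ π
  | .neg φ, k => ¬ STL.sat s φ k
  | .conj φ₁ φ₂, k => STL.sat s φ₁ k ∧ STL.sat s φ₂ k
  | .disj φ₁ φ₂, k => STL.sat s φ₁ k ∨ STL.sat s φ₂ k
  | .ev a b _ φ, k => ∃ k' ∈ Finset.Icc (k + a) (k + b), STL.sat s φ k'
  | .alw a b _ φ, k => ∀ k' ∈ Finset.Icc (k + a) (k + b), STL.sat s φ k'

/-- Quantitative semantics (robustness) of STL. -/
noncomputable def STL.rob {d : ℕ} (s : ℕ → Fin d → ℝ) : STL d → ℕ → ℝ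
  | .top, _ => 1
  | .pred h π, k => h (s k) - π
  | .neg φ, k => - STL.rob s φ k
  | .conj φ₁ φ₂, k => min (STL.rob s φ₁ k) (STL.rob s φ₂ k)
  | .disj φ₁ φ₂, k => max (STL.rob s φ₁ k) (STL.rob s φ₂ k)
  | .ev a b hab φ, k =>
      (Finset.Icc (k + a) (k + b)).sup'
        (Finset.nonempty_Icc.mpr (by omega)) (STL.rob s φ)
  | .alw a b hab φ, k =>
      (Finset.Icc (k + a) (k + b)).inf'
        (Finset.nonempty_Icc.mpr (by omega)) (STL.rob s φ)

/-- soundness of STL robustness: for any STL formula `φ`, signal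
`s` and time `k`, `ρ(s,φ,k) > 0` implies `(s,k) ⊨ φ`, and `ρ(s,φ,k) < 0`
implies `(s,k) ⊭ φ`. -/
theorem stmt_5 {d : ℕ} (φ : STL d) (s : ℕ → Fin d → ℝ) (k : ℕ) :
    (0 < STL.rob s φ k → STL.sat s φ k)
    ∧ (STL.rob s φ k < 0 → ¬ STL.sat s φ k) := by
  induction φ generalizing k with
  | top => simp [STL.rob, STL.sat]
  | pred h π =>
      constructor <;> intro h1 <;> simp [STL.rob, STL.sat] at * <;> linarith
  | neg φ ih =>
      refine ⟨fun h1 h2 => ?_, fun h1 h2 => ?_⟩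
      · simp [STL.rob] at h1
        exact (ih k).2 h1 h2
      · simp [STL.rob] at h1
        exact h2 ((ih k).1 h1)
  | conj φ₁ φ₂ ih₁ ih₂ =>
      refine ⟨fun h1 => ?_, fun h1 h2 => ?_⟩
      · simp [STL.rob, lt_min_iff] at h1
        exact ⟨(ih₁ k).1 h1.1, (ih₂ k).1 h1.2⟩
      · simp [STL.rob, min_lt_iff] at h1
        rcases h1 with h1 | h1
        · exact (ih₁ k).2 h1 h2.1
        · exact (ih₂ k).2 h1 h2.2
  | disj φ₁ φ₂ ih₁ ih₂ =>
      refine ⟨fun h1 => ?_, fun h1 h2 => ?_⟩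
      · simp [STL.rob, lt_max_iff] at h1
        rcases h1 with h1 | h1
        · exact Or.inl ((ih₁ k).1 h1)
        · exact Or.inr ((ih₂ k).1 h1)
      · simp [STL.rob, max_lt_iff] at h1
        rcases h2 with h2 | h2
        · exact (ih₁ k).2 h1.1 h2
        · exact (ih₂ k).2 h1.2 h2
  | ev a b hab φ ih =>
      refine ⟨fun h1 => ?_, fun h1 h2 => ?_⟩
      · simp only [STL.rob, Finset.lt_sup'_iff] at h1
        obtain ⟨k', hk', hr⟩ := h1
        exact ⟨k', hk', (ih k').1 hr⟩
      · simp only [STL.rob, Finset.sup'_lt_iff] at h1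
        obtain ⟨k', hk', hs⟩ := h2
        exact (ih k').2 (h1 k' hk') hs
  | alw a b hab φ ih =>
      refine ⟨fun h1 k' hk' => ?_, fun h1 h2 => ?_⟩
      · simp only [STL.rob, Finset.lt_inf'_iff] at h1
        exact (ih k').1 (h1 k' hk')
      · simp only [STL.rob, Finset.inf'_lt_iff] at h1
        obtain ⟨k', hk', hr⟩ := h1
        exact (ih k').2 hr (h2 k' hk')
end

section
/- The time horizon of an STL formula bounds the times inspected by its semantics: if two signals s and s' agree on the time window {k, ..., k + ‖φ‖}, then (s, k) ⊨ φ if and only if (s', k) ⊨ φ. -/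
/-- The time horizon `‖φ‖` of an STL formula. -/
def STL.horizon {d : ℕ} : STL d → ℕ
  | .top => 0
  | .pred _ _ => 0
  | .neg φ => φ.horizon
  | .conj φ₁ φ₂ => max φ₁.horizon φ₂.horizon
  | .disj φ₁ φ₂ => max φ₁.horizon φ₂.horizon
  | .ev _ b _ φ => b + φ.horizon
  | .alw _ b _ φ => b + φ.horizon

/-- the horizon bounds the times inspected by the Boolean
semantics: if `s` and `s'` agree on `{k, …, k + ‖φ‖}`, then
`(s,k) ⊨ φ ↔ (s',k) ⊨ φ`. -/
theorem stmt_15 {d : ℕ} (φ : STL d) (s s' : ℕ → Fin d → ℝ) (k : ℕ)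
    (hagree : ∀ t : ℕ, k ≤ t → t ≤ k + φ.horizon → s t = s' t) :
    STL.sat s φ k ↔ STL.sat s' φ k := by
    induction φ generalizing k with
  | top => simp [STL.sat]
  | pred h π =>
    simp only [STL.sat]
    rw [hagree k le_rfl (by simp [STL.horizon])]
  | neg φ ih =>
    simp only [STL.sat]
    exact not_congr (ih k hagree)
  | conj φ₁ φ₂ ih₁ ih₂ =>
    simp only [STL.sat, STL.horizon] at *
    exact and_congr (ih₁ k fun t h1 h2 => hagree t h1 (by omega))
      (ih₂ k fun t h1 h2 => hagree t h1 (by omega))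
  | disj φ₁ φ₂ ih₁ ih₂ =>
    simp only [STL.sat, STL.horizon] at *
    exact or_congr (ih₁ k fun t h1 h2 => hagree t h1 (by omega))
      (ih₂ k fun t h1 h2 => hagree t h1 (by omega))
  | ev a b hab φ ih =>
    simp only [STL.sat, STL.horizon] at *
    refine exists_congr fun k' => and_congr_right fun hk' => ?_
    simp only [Finset.mem_Icc] at hk'
    exact ih k' fun t h1 h2 => hagree t (by omega) (by omega)
  | alw a b hab φ ih =>
    simp only [STL.sat, STL.horizon] at *
    refine forall_congr' fun k' => imp_congr_right fun hk' => ?_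
    simp only [Finset.mem_Icc] at hk'
    exact ih k' fun t h1 h2 => hagree t (by omega) (by omega)
end
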